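/- Let Φ_F = {±e_i : 1 ≤ i ≤ 4} ∪ {±e_i ± e_j : 1 ≤ i < j ≤ 4} ∪ {(±1/2, ±1/2, ±1/2, ±1/2)} be the set of roots of type F_4 in ℝ^4, and let M = {a ∈ ℤ^4 : a_1 + a_2 + a_3 + a_4 is even}. For every even integer q ≥ 0, the number of points u ∈ M satisfying |⟨u, v⟩| ≤ q for all v ∈ Φ_F equals q^4 + 2q^3 + 2q^2 + 4q + 1. -/

import Mathlib

/-
The root inequalities say exactly that `|u i| + |u j| ≤ q` for all `i ≠ j`: the roots `e_i ± e_j`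
give this, and it implies the bounds for `±e_i` and for the half-integral roots. For `q = 2t` at
most one coordinate of such a point exceeds `t` in absolute value. The points with no such
coordinate form the box `[-t, t]^4`; those whose `i`-th coordinate `x` has `t < |x|` are `x`
together with an arbitrary point of the box `[-(2t - |x|), 2t - |x|]^3` whose coordinate sum has
the parity of `x`. Points of `[-m, m]^k` with a given parity of their sum are counted with the
character `(-1)^(∑ w)`, whose sum over the box factors as `((-1)^m)^k`; what remains is a sum of
odd cubes.
-/

open Finset

/-- The `i`-th standard basis vector of `ℝ^n`. -/
noncomputable def stdBasis (n : ℕ) (i : Fin n) : Fin n → ℝ := fun j => if j = i then 1 else 0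

/-- The standard inner product on `ℝ^n`. -/
noncomputable def innerProd {n : ℕ} (u v : Fin n → ℝ) : ℝ := ∑ i, u i * v i

/-- The roots of type `F_4`: `±e_i`, `±e_i ± e_j` for `i < j`, and `(±1/2, ±1/2, ±1/2, ±1/2)`. -/
noncomputable def typeF : Set (Fin 4 → ℝ) :=
  {v | ∃ i, v = stdBasis 4 i ∨ v = -stdBasis 4 i} ∪
  {v | ∃ i j, i < j ∧ ∃ ε δ : ℝ, (ε = 1 ∨ ε = -1) ∧ (δ = 1 ∨ δ = -1) ∧
    v = ε • stdBasis 4 i + δ • stdBasis 4 j} ∪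
  {v | ∀ i, v i = 1/2 ∨ v i = -1/2}

/-- The dual lattice of the `F_4` root lattice: integer vectors with even coordinate sum. -/
def evenLattice : Set (Fin 4 → ℝ) :=
  {a | (∀ i, ∃ m : ℤ, a i = m) ∧ ∃ m : ℤ, ∑ i, a i = 2 * m}

noncomputable def intBox (k m : ℕ) : Finset (Fin k → ℤ) :=
  Fintype.piFinset fun _ => Icc (-(m : ℤ)) m

noncomputable def evenSumBox (k m : ℕ) (s : ℤ) : Finset (Fin k → ℤ) :=
  {w ∈ intBox k m | Even (s + ∑ i, w i)}

theorem Int.negOnePow_sum {ι : Type*} (s : Finset ι) (f : ι → ℤ) :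
    (∑ i ∈ s, f i).negOnePow = ∏ i ∈ s, (f i).negOnePow := by
  induction s using Finset.cons_induction with
  | empty => rfl
  | cons i s _ ih => rw [sum_cons, prod_cons, Int.negOnePow_add, ih]

theorem two_mul_card_filter_even {α : Type*} (A : Finset α) (f : α → ℤ) :
    2 * (#{a ∈ A | Even (f a)} : ℤ) = #A + ∑ a ∈ A, ((f a).negOnePow : ℤ) := by
  rw [card_filter, Nat.cast_sum, mul_sum, card_eq_sum_ones, Nat.cast_sum, ← sum_add_distrib]
  refine sum_congr rfl fun a _ => ?_
  rcases Int.even_or_odd (f a) with h | h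
  · simp [h, Int.negOnePow_even _ h]
  · simp [Int.not_even_iff_odd.mpr h, Int.negOnePow_odd _ h]

theorem sum_Icc_negOnePow (m : ℕ) :
    ∑ x ∈ Icc (-(m : ℤ)) m, (x.negOnePow : ℤ) = (m : ℤ).negOnePow := by
  induction m with
  | zero => simp
  | succ m ih =>
    have hIcc : Icc (-((m + 1 : ℕ) : ℤ)) (m + 1 : ℕ) =
        cons (-(m + 1 : ℤ)) (cons (m + 1 : ℤ) (Icc (-(m : ℤ)) m) (by simp)) (by simp; omega) := by
      ext x
      simp only [mem_Icc, mem_cons]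
      omega
    rw [hIcc, sum_cons, sum_cons, ih, Int.negOnePow_neg, Nat.cast_succ, Int.negOnePow_succ]
    push_cast
    ring

theorem card_intBox (k m : ℕ) : #(intBox k m) = (2 * m + 1) ^ k := by
  rw [intBox, Fintype.card_piFinset, prod_const, Int.card_Icc, card_univ, Fintype.card_fin]
  congr 1
  omega

theorem two_mul_card_evenSumBox (k m : ℕ) (s : ℤ) :
    2 * (#(evenSumBox k m s) : ℤ) = (2 * m + 1) ^ k + ((s + m * k).negOnePow : ℤ) := by
  rw [evenSumBox, two_mul_card_filter_even, card_intBox]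
  push_cast
  congr 1
  simp only [Int.negOnePow_add, Int.negOnePow_sum, Units.val_mul, ← mul_sum, Units.coe_prod]
  rw [intBox, sum_prod_piFinset (Icc (-(m : ℤ)) m) fun _ x => (x.negOnePow : ℤ)]
  rw [prod_const, sum_Icc_negOnePow, card_univ, Fintype.card_fin, ← Units.val_pow_eq_pow_val]
  simp only [Int.negOnePow_def, zpow_mul, zpow_natCast]

noncomputable def pairBoundedEven (n q : ℕ) : Finset (Fin n → ℤ) :=
  {z ∈ intBox n q | Even (∑ i, z i) ∧ ∀ i j, i ≠ j → (z i).natAbs + (z j).natAbs ≤ q}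

noncomputable def annulus (t : ℕ) : Finset ℤ := {x ∈ Icc (-(2 * t : ℤ)) (2 * t) | t < x.natAbs}

theorem pairBound_iff_of_le_natAbs {ι : Type*} {z : ι → ℤ} {t : ℕ} {i : ι}
    (hi : t ≤ (z i).natAbs) :
    (∀ a b, a ≠ b → (z a).natAbs + (z b).natAbs ≤ 2 * t) ↔
      ∀ c, c ≠ i → (z i).natAbs + (z c).natAbs ≤ 2 * t := by
  refine ⟨fun H c hc => H i c hc.symm, fun H a b hab => ?_⟩
  rcases eq_or_ne a i with rfl | ha
  · exact H b hab.symm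
  rcases eq_or_ne b i with rfl | hb
  · have := H a ha; omega
  · have := H a ha; have := H b hb; omega

theorem mem_pairBoundedEven_iff_removeNth {n t : ℕ} {z : Fin (n + 1) → ℤ} {i : Fin (n + 1)}
    (hi : z i ∈ annulus t) :
    z ∈ pairBoundedEven (n + 1) (2 * t) ↔
      i.removeNth z ∈ evenSumBox n (2 * t - (z i).natAbs) (z i) := by
  simp only [annulus, mem_filter, mem_Icc] at hi
  have hne (P : Fin (n + 1) → Prop) : (∀ c, c ≠ i → P c) ↔ ∀ j, P (i.succAbove j) := by
    simp [Fin.forall_iff_succAbove i, Fin.succAbove_ne]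
  simp only [pairBoundedEven, evenSumBox, intBox, mem_filter, Fintype.mem_piFinset, mem_Icc,
    Fin.removeNth_apply, ← Fin.sum_univ_succAbove _ i, pairBound_iff_of_le_natAbs hi.2.le, hne,
    Fin.forall_iff_succAbove i (P := fun c => _ ≤ z c ∧ z c ≤ _)]
  constructor
  · rintro ⟨⟨-, hbox⟩, heven, hpair⟩
    exact ⟨fun j => by have := hpair j; omega, heven⟩
  · rintro ⟨hbox, heven⟩
    exact ⟨⟨by omega, fun j => by have := hbox j; omega⟩, heven,
      fun j => by have := hbox j; omega⟩

theorem card_filter_lt_natAbs (n t : ℕ) (i : Fin (n + 1)) :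
    #{z ∈ pairBoundedEven (n + 1) (2 * t) | t < (z i).natAbs} =
      ∑ x ∈ annulus t, #(evenSumBox n (2 * t - x.natAbs) x) := by
  rw [card_eq_sum_card_fiberwise (f := fun z => z i) (t := annulus t)]
  swap
  · intro z hz
    simp only [pairBoundedEven, intBox, coe_filter, mem_filter, Fintype.mem_piFinset,
      Set.mem_ofPred_eq] at hz
    refine mem_filter.2 ⟨?_, hz.2⟩
    simpa using hz.1.1 i
  refine sum_congr rfl fun x hx => ?_
  rw [filter_filter]
  refine card_nbij' i.removeNth (Fin.insertNth (α := fun _ => ℤ) i x) ?_ ?_ ?_ ?_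
  · intro z hz
    obtain ⟨hmem, -, rfl⟩ := mem_filter.1 hz
    exact (mem_pairBoundedEven_iff_removeNth hx).1 hmem
  · intro w hw
    have hxi : Fin.insertNth (α := fun _ => ℤ) i x w i = x :=
      Fin.insertNth_apply_same (α := fun _ => ℤ) i x w
    rw [← hxi] at hx hw
    refine mem_filter.2 ⟨(mem_pairBoundedEven_iff_removeNth hx).2 ?_, (mem_filter.1 hx).2, hxi⟩
    rwa [Fin.removeNth_insertNth]
  · intro z hz
    obtain ⟨-, -, rfl⟩ := mem_filter.1 hz
    exact Fin.insertNth_self_removeNth i z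
  · intro w _
    exact Fin.removeNth_insertNth (α := fun _ => ℤ) i x w

theorem filter_forall_natAbs_le (n t : ℕ) :
    {z ∈ pairBoundedEven n (2 * t) | ∀ i, (z i).natAbs ≤ t} = evenSumBox n t 0 := by
  ext z
  simp only [pairBoundedEven, evenSumBox, intBox, mem_filter, Fintype.mem_piFinset, mem_Icc,
    zero_add]
  constructor
  · rintro ⟨⟨-, heven, -⟩, hsmall⟩
    exact ⟨fun i => by have := hsmall i; omega, heven⟩
  · rintro ⟨hbox, heven⟩
    refine ⟨⟨fun i => by have := hbox i; omega, heven, fun i j _ => ?_⟩, fun i => ?_⟩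
    · have := hbox i; have := hbox j; omega
    · have := hbox i; omega

theorem card_pairBoundedEven_eq (n t : ℕ) :
    #(pairBoundedEven (n + 1) (2 * t)) =
      #(evenSumBox (n + 1) t 0) +
        (n + 1) * ∑ x ∈ annulus t, #(evenSumBox n (2 * t - x.natAbs) x) := by
  rw [← card_filter_add_card_filter_not (fun z => ∀ i, (z i).natAbs ≤ t),
    filter_forall_natAbs_le]
  congr 1
  have hlarge : {z ∈ pairBoundedEven (n + 1) (2 * t) | ¬ ∀ i, (z i).natAbs ≤ t} =
      univ.biUnion fun i => {z ∈ pairBoundedEven (n + 1) (2 * t) | t < (z i).natAbs} := by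
    ext z
    simp [not_le]
  rw [hlarge, card_biUnion]
  · simp [card_filter_lt_natAbs]
  · intro i _ j _ hij
    refine disjoint_filter.2 fun z hz hi hj => ?_
    have := (mem_filter.1 hz).2.2 i j hij
    omega

theorem sum_annulus {M : Type*} [AddCommMonoid M] (t : ℕ) (f : ℕ → M) :
    ∑ x ∈ annulus t, f (2 * t - x.natAbs) = 2 • ∑ m ∈ range t, f m := by
  rw [← sum_filter_add_sum_filter_not _ (0 < ·), two_nsmul]
  congr 1
  · refine sum_nbij' (fun x => 2 * t - x.natAbs) (fun m => (2 * t - m : ℤ)) ?_ ?_ ?_ ?_ ?_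
    all_goals intro x hx
    all_goals simp only [annulus, mem_filter, mem_Icc, mem_range] at hx ⊢
    all_goals omega
  · refine sum_nbij' (fun x => 2 * t - x.natAbs) (fun m => (m - 2 * t : ℤ)) ?_ ?_ ?_ ?_ ?_
    all_goals intro x hx
    all_goals simp only [annulus, mem_filter, mem_Icc, mem_range] at hx ⊢
    all_goals omega

theorem two_mul_card_evenSumBox_of_mem_annulus {t : ℕ} {x : ℤ} (hx : x ∈ annulus t) :
    2 * (#(evenSumBox 3 (2 * t - x.natAbs) x) : ℤ) =
      (2 * (2 * t - x.natAbs : ℕ) + 1) ^ 3 + 1 := by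
  rw [two_mul_card_evenSumBox, Int.negOnePow_even]
  · rfl
  simp only [annulus, mem_filter, mem_Icc] at hx
  rw [Int.even_iff]
  push_cast
  omega

theorem sum_range_odd_cube_add_one (t : ℕ) :
    ∑ m ∈ range t, ((2 * m + 1) ^ 3 + 1 : ℤ) = 2 * t ^ 4 - t ^ 2 + t := by
  induction t with
  | zero => simp
  | succ t ih => rw [sum_range_succ, ih]; push_cast; ring

theorem card_pairBoundedEven_four (t : ℕ) :
    (#(pairBoundedEven 4 (2 * t)) : ℤ) = 16 * t ^ 4 + 16 * t ^ 3 + 8 * t ^ 2 + 8 * t + 1 := by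
  have hcentre := two_mul_card_evenSumBox 4 t 0
  rw [Int.negOnePow_even _ ⟨2 * t, by ring⟩, Units.val_one] at hcentre
  have hannulus : 2 * ∑ x ∈ annulus t, (#(evenSumBox 3 (2 * t - x.natAbs) x) : ℤ) =
      2 * ∑ m ∈ range t, ((2 * m + 1) ^ 3 + 1 : ℤ) := by
    rw [mul_sum, sum_congr rfl fun x hx => two_mul_card_evenSumBox_of_mem_annulus hx,
      sum_annulus t fun m => (2 * (m : ℤ) + 1) ^ 3 + 1, nsmul_eq_mul, Nat.cast_ofNat]
  rw [sum_range_odd_cube_add_one] at hannulus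
  rw [card_pairBoundedEven_eq 3 t]
  push_cast
  linarith

theorem innerProd_eq_dotProduct {n : ℕ} (u v : Fin n → ℝ) : innerProd u v = u ⬝ᵥ v := rfl

theorem stdBasis_eq_single (n : ℕ) (i : Fin n) : stdBasis n i = Pi.single i 1 := by
  funext j
  simp [stdBasis, Pi.single_apply]

theorem innerProd_stdBasis {n : ℕ} (u : Fin n → ℝ) (i : Fin n) :
    innerProd u (stdBasis n i) = u i := by
  rw [innerProd_eq_dotProduct, stdBasis_eq_single, dotProduct_single, mul_one]

theorem innerProd_smul_stdBasis_add {n : ℕ} (u : Fin n → ℝ) (i j : Fin n) (ε δ : ℝ) :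
    innerProd u (ε • stdBasis n i + δ • stdBasis n j) = ε * u i + δ * u j := by
  rw [innerProd_eq_dotProduct, dotProduct_add, dotProduct_smul, dotProduct_smul,
    ← innerProd_eq_dotProduct, ← innerProd_eq_dotProduct, innerProd_stdBasis, innerProd_stdBasis,
    smul_eq_mul, smul_eq_mul, mul_comm ε, mul_comm δ]

theorem abs_add_abs_le_iff {α : Type*} [AddCommGroup α] [LinearOrder α] [IsOrderedAddMonoid α]
    {a b c : α} : |a| + |b| ≤ c ↔ |a + b| ≤ c ∧ |a - b| ≤ c := by
  refine ⟨fun h => ⟨(abs_add_le a b).trans h, (abs_sub a b).trans h⟩, fun ⟨hadd, hsub⟩ => ?_⟩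
  rw [abs_le] at hadd hsub
  rcases abs_cases a with ⟨ha, -⟩ | ⟨ha, -⟩ <;> rcases abs_cases b with ⟨hb, -⟩ | ⟨hb, -⟩ <;>
    rw [ha, hb]
  · exact hadd.2
  · simpa [sub_eq_add_neg] using hsub.2
  · rw [neg_add_eq_sub, ← neg_sub]; exact neg_le.1 hsub.1
  · rw [← neg_add]; exact neg_le.1 hadd.1

theorem forall_typeF_abs_innerProd_le_iff (u : Fin 4 → ℝ) (c : ℝ) :
    (∀ v ∈ typeF, |innerProd u v| ≤ c) ↔ ∀ i j, i ≠ j → |u i| + |u j| ≤ c := by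
  constructor
  · intro h
    have hlt : ∀ i j, i < j → |u i| + |u j| ≤ c := fun i j hij => by
      have hplus := h _ (Or.inl (Or.inr ⟨i, j, hij, 1, 1, Or.inl rfl, Or.inl rfl, rfl⟩))
      have hminus := h _ (Or.inl (Or.inr ⟨i, j, hij, 1, -1, Or.inl rfl, Or.inr rfl, rfl⟩))
      rw [innerProd_smul_stdBasis_add] at hplus hminus
      exact abs_add_abs_le_iff.2 ⟨by simpa using hplus, by simpa [sub_eq_add_neg] using hminus⟩
    intro i j hij
    rcases hij.lt_or_gt with hij | hij
    · exact hlt i j hij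
    · rw [add_comm]; exact hlt j i hij
  · rintro h v ((⟨i, rfl | rfl⟩ | ⟨i, j, hij, ε, δ, hε, hδ, rfl⟩) | hhalf)
    · obtain ⟨j, hj⟩ := exists_ne i
      rw [innerProd_stdBasis]
      linarith [h i j hj.symm, abs_nonneg (u j)]
    · obtain ⟨j, hj⟩ := exists_ne i
      rw [innerProd_eq_dotProduct, dotProduct_neg, abs_neg, ← innerProd_eq_dotProduct,
        innerProd_stdBasis]
      linarith [h i j hj.symm, abs_nonneg (u j)]
    · rw [innerProd_smul_stdBasis_add]
      have hunit : ∀ ε : ℝ, (ε = 1 ∨ ε = -1) → |ε| = 1 := by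
        rintro ε (rfl | rfl) <;> simp
      calc |ε * u i + δ * u j| ≤ |ε * u i| + |δ * u j| := abs_add_le _ _
        _ = |u i| + |u j| := by rw [abs_mul, abs_mul, hunit ε hε, hunit δ hδ, one_mul, one_mul]
        _ ≤ c := h i j hij.ne
    · have hhalf' : ∀ i, |v i| = 1 / 2 := fun i => by
        rcases hhalf i with h | h <;> rw [h] <;> norm_num
      calc |innerProd u v| ≤ ∑ i, |u i * v i| := abs_sum_le_sum_abs _ _
        _ = ((|u 0| + |u 1|) + (|u 2| + |u 3|)) / 2 := by
          simp only [abs_mul, hhalf', Fin.sum_univ_four]; ring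
        _ ≤ c := by linarith [h 0 1 (by decide), h 2 3 (by decide)]

theorem mem_evenLattice_iff (u : Fin 4 → ℝ) :
    u ∈ evenLattice ↔ ∃ z : Fin 4 → ℤ, Even (∑ i, z i) ∧ (fun i => (z i : ℝ)) = u := by
  constructor
  · rintro ⟨hint, m, hm⟩
    choose z hz using hint
    refine ⟨z, ⟨m, ?_⟩, funext fun i => (hz i).symm⟩
    simp only [hz] at hm
    rw [← two_mul]
    exact_mod_cast hm
  · rintro ⟨z, ⟨m, hm⟩, rfl⟩
    exact ⟨fun i => ⟨z i, rfl⟩, m, by rw [← Int.cast_sum, hm, two_mul, Int.cast_add]⟩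

theorem natAbs_add_natAbs_le_iff (a b : ℤ) (q : ℕ) :
    a.natAbs + b.natAbs ≤ q ↔ |(a : ℝ)| + |(b : ℝ)| ≤ q := by
  rw [← Int.cast_abs, ← Int.cast_abs, ← Nat.cast_natAbs, ← Nat.cast_natAbs]
  norm_cast

theorem setOf_eq_image_pairBoundedEven (q : ℕ) :
    {u | u ∈ evenLattice ∧ ∀ v ∈ typeF, |innerProd u v| ≤ (q : ℝ)} =
      (fun (z : Fin 4 → ℤ) i => (z i : ℝ)) '' ↑(pairBoundedEven 4 q) := by
  ext u
  simp only [Set.mem_ofPred_eq, forall_typeF_abs_innerProd_le_iff, mem_evenLattice_iff,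
    Set.mem_image, mem_coe, pairBoundedEven, intBox, mem_filter, Fintype.mem_piFinset, mem_Icc,
    natAbs_add_natAbs_le_iff]
  constructor
  · rintro ⟨⟨z, heven, rfl⟩, hpair⟩
    refine ⟨z, ⟨fun i => ?_, heven, hpair⟩, rfl⟩
    obtain ⟨j, hj⟩ := exists_ne i
    have := (natAbs_add_natAbs_le_iff _ _ _).2 (hpair i j hj.symm)
    omega
  · rintro ⟨z, ⟨-, heven, hpair⟩, rfl⟩
    exact ⟨⟨z, heven, rfl⟩, hpair⟩

/-- Ehrhart count in type `F_4`, even case: for every even `q ≥ 0`, the number of points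
`u` of the dual lattice `M` of the `F_4` root lattice with `|⟨u,v⟩| ≤ q` for all roots `v`
(i.e. lattice points of the dilate `q·F` of the diagonal splitting polytope) is
`q⁴ + 2q³ + 2q² + 4q + 1`. -/
theorem typeF_ehrhart_even (q : ℕ) (hq : Even q) :
    {u | u ∈ evenLattice ∧ ∀ v ∈ typeF, |innerProd u v| ≤ (q : ℝ)}.ncard
      = q ^ 4 + 2 * q ^ 3 + 2 * q ^ 2 + 4 * q + 1 := by
  obtain ⟨t, rfl⟩ := hq
  have hinj : Function.Injective fun (z : Fin 4 → ℤ) i => (z i : ℝ) :=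
    fun z w h => funext fun i => Int.cast_injective (congrFun h i)
  rw [setOf_eq_image_pairBoundedEven, Set.ncard_image_of_injective _ hinj, Set.ncard_coe_finset,
    ← two_mul]
  zify
  rw [card_pairBoundedEven_four]
  ring
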